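/- Let n ≥ 1, N = 2^n and θ ≥ 0. For each k ∈ {0, …, N−1} and each l ∈ {1, …, n}, let α^{(k,l)} = (α^{(k,l)}_x, α^{(k,l)}_y, α^{(k,l)}_z) ∈ ℝ³ be a unit vector, and set Γ_k = ∑_{l=1}^{n} I₂^{⊗(l−1)} ⊗ (α^{(k,l)}_x σ_x + α^{(k,l)}_y σ_y + α^{(k,l)}_z σ_z) ⊗ I₂^{⊗(n−l)}. Let F_G = N^{−1/2} ∑_{j,k=0}^{N−1} e^{2πijk/N} exp(iθΓ_k) E_{kj} be the generalized quantum Fourier transform and F = N^{−1/2} ∑_{j,k=0}^{N−1} e^{2πijk/N} E_{kj} the standard quantum Fourier transform. Then ‖F_G − F‖ ≤ 2^{3n/2} · √2 · θ n · e^{√2 θ n}, where ‖·‖ denotes the operator norm on N×N matrices. -/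

import Mathlib

/-! Each `Γ_k` is a sum of `n` Kronecker products of unitaries (a Pauli combination `α · σ` with
`‖α‖ = 1` is Hermitian and squares to `1`), so `‖Γ_k‖ ≤ n` and, from the exponential series,
`‖exp(iθΓ_k) - 1‖ ≤ θn e^{θn}`. Now `F_G - F` is `N^{-1/2}` times a sum of `N²` terms
`e^{2πijk/N} (exp(iθΓ_k) - 1) E_{kj}`, each of norm at most `θn e^{θn}` because `‖E_{kj}‖ = 1`;
the triangle inequality gives `N^{3/2} θn e^{θn}`, which is below the claimed bound. -/

open Matrix
open scoped Matrix.Norms.L2Operator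

noncomputable section

/-- The Pauli matrix `σ_x`. -/
def σx : Matrix (Fin 2) (Fin 2) ℂ := !![0, 1; 1, 0]

/-- The Pauli matrix `σ_y`. -/
def σy : Matrix (Fin 2) (Fin 2) ℂ := !![0, -Complex.I; Complex.I, 0]

/-- The Pauli matrix `σ_z`. -/
def σz : Matrix (Fin 2) (Fin 2) ℂ := !![1, 0; 0, -1]

/-- The `n`-fold Kronecker product of a family of `2 × 2` matrices, realized on the
index type `Fin n → Fin 2` (factor `l = 0` is the leftmost tensor factor). -/
def tensorFam {n : ℕ} (M : Fin n → Matrix (Fin 2) (Fin 2) ℂ) :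
    Matrix (Fin n → Fin 2) (Fin n → Fin 2) ℂ :=
  Matrix.of fun i j => ∏ l, M l (i l) (j l)

open scoped Nat

theorem norm_le_one_of_mem_unitary {E : Type*} [NormedRing E] [StarRing E] [CStarRing E] {U : E}
    (hU : U ∈ unitary E) : ‖U‖ ≤ 1 := by
  rcases subsingleton_or_nontrivial E with _ | _
  · simp [Subsingleton.elim U 0]
  · exact (CStarRing.norm_of_mem_unitary hU).le

namespace Matrix

variable {m : Type*} [Fintype m] [DecidableEq m]

theorem reindex_mem_unitary {α m' : Type*} [CommRing α] [StarRing α] [Fintype m'] [DecidableEq m']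
    (e : m ≃ m') {U : Matrix m m α} (hU : U ∈ unitary (Matrix m m α)) :
    reindex e e U ∈ unitary (Matrix m' m' α) := by
  rw [← unitaryGroup, mem_unitaryGroup_iff', star_eq_conjTranspose, conjTranspose_reindex,
    reindex_apply, reindex_apply, submatrix_mul_equiv, ← star_eq_conjTranspose,
    Unitary.star_mul_self_of_mem hU, submatrix_one_equiv]

theorem l2_opNorm_single_one {𝕜 : Type*} [RCLike 𝕜] (i j : m) :
    ‖single i j (1 : 𝕜)‖ = 1 := by
  have hsq : ‖single i j (1 : 𝕜)‖ * ‖single i j (1 : 𝕜)‖ = 1 := by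
    rw [← l2_opNorm_conjTranspose_mul_self, conjTranspose_single, star_one,
      single_mul_single_same, one_mul, ← diagonal_single, l2_opNorm_diagonal, Pi.norm_single,
      norm_one]
  nlinarith [norm_nonneg (single i j (1 : 𝕜))]

theorem norm_sum_sum_smul_mul_single_le {𝕜 : Type*} [RCLike 𝕜] (ω : m → m → 𝕜)
    (hω : ∀ j k, ‖ω j k‖ = 1) (A : m → Matrix m m 𝕜) {ε : ℝ} (hA : ∀ k, ‖A k‖ ≤ ε) :
    ‖∑ j, ∑ k, ω j k • (A k * single k j 1)‖ ≤ Fintype.card m ^ 2 * ε := by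
  have hterm (j k : m) : ‖ω j k • (A k * single k j 1)‖ ≤ ε := by
    rw [norm_smul, hω, one_mul]
    calc ‖A k * single k j 1‖ ≤ ‖A k‖ * ‖single k j (1 : 𝕜)‖ := l2_opNorm_mul _ _
      _ ≤ ε := by rw [l2_opNorm_single_one, mul_one]; exact hA k
  calc ‖∑ j, ∑ k, ω j k • (A k * single k j 1)‖ ≤ ∑ _j : m, ∑ _k : m, ε :=
        norm_sum_le_of_le _ fun j _ => norm_sum_le_of_le _ fun k _ => hterm j k
    _ = Fintype.card m ^ 2 * ε := by simp [sq, mul_assoc]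

end Matrix

theorem NormedSpace.norm_exp_sub_one_le (𝕂 : Type*) {𝔸 : Type*} [RCLike 𝕂] [NormedRing 𝔸]
    [NormedAlgebra 𝕂 𝔸] [CompleteSpace 𝔸] (x : 𝔸) :
    ‖exp x - 1‖ ≤ ‖x‖ * Real.exp ‖x‖ := by
  have hs : Summable fun k : ℕ => (k ! : 𝕂)⁻¹ • x ^ k := expSeries_summable' x
  have htail : exp x - 1 = ∑' k : ℕ, ((k + 1)! : 𝕂)⁻¹ • x ^ (k + 1) := by
    rw [congrFun (exp_eq_tsum 𝕂) x, hs.tsum_eq_zero_add]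
    simp
  have hmajorant : HasSum (fun k : ℕ => ‖x‖ * (‖x‖ ^ k / k !)) (‖x‖ * Real.exp ‖x‖) := by
    rw [Real.exp_eq_exp_ℝ]
    exact (expSeries_div_hasSum_exp ‖x‖).mul_left ‖x‖
  rw [htail]
  refine tsum_of_norm_bounded hmajorant fun k => ?_
  calc ‖((k + 1)! : 𝕂)⁻¹ • x ^ (k + 1)‖ ≤ ((k + 1)! : ℝ)⁻¹ * ‖x‖ ^ (k + 1) := by
        rw [norm_smul, norm_inv, RCLike.norm_natCast]
        gcongr
        exact norm_pow_le' x k.succ_pos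
    _ ≤ (k ! : ℝ)⁻¹ * ‖x‖ ^ (k + 1) := by
        gcongr
        exact k.le_succ
    _ = ‖x‖ * (‖x‖ ^ k / k !) := by ring

theorem tensorFam_mul {n : ℕ} (M N : Fin n → Matrix (Fin 2) (Fin 2) ℂ) :
    tensorFam M * tensorFam N = tensorFam (fun l => M l * N l) := by
  ext i j
  simp only [tensorFam, mul_apply, of_apply, Finset.prod_univ_sum, Fintype.piFinset_univ,
    Finset.prod_mul_distrib]

theorem tensorFam_one {n : ℕ} :
    tensorFam (fun _ : Fin n => (1 : Matrix (Fin 2) (Fin 2) ℂ)) = 1 := by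
  ext i j
  by_cases h : i = j
  · subst h; simp [tensorFam]
  · obtain ⟨l, hl⟩ := Function.ne_iff.mp h
    rw [one_apply_ne h]
    exact Finset.prod_eq_zero (Finset.mem_univ l) (one_apply_ne hl)

theorem star_tensorFam {n : ℕ} (M : Fin n → Matrix (Fin 2) (Fin 2) ℂ) :
    star (tensorFam M) = tensorFam (fun l => star (M l)) := by
  ext i j
  simp [tensorFam, star_prod]

theorem tensorFam_mem_unitary {n : ℕ} {M : Fin n → Matrix (Fin 2) (Fin 2) ℂ}
    (hM : ∀ l, M l ∈ unitary (Matrix (Fin 2) (Fin 2) ℂ)) :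
    tensorFam M ∈ unitary (Matrix (Fin n → Fin 2) (Fin n → Fin 2) ℂ) := by
  rw [← unitaryGroup, mem_unitaryGroup_iff', star_tensorFam, tensorFam_mul]
  simp only [Unitary.star_mul_self_of_mem (hM _), tensorFam_one]

theorem pauli_combination_mem_unitary {a b c : ℝ} (h : a ^ 2 + b ^ 2 + c ^ 2 = 1) :
    (a : ℂ) • σx + (b : ℂ) • σy + (c : ℂ) • σz ∈ unitary (Matrix (Fin 2) (Fin 2) ℂ) := by
  have h' : (a : ℂ) ^ 2 + (b : ℂ) ^ 2 + (c : ℂ) ^ 2 = 1 := by exact_mod_cast h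
  rw [← unitaryGroup, mem_unitaryGroup_iff']
  ext i j
  fin_cases i <;> fin_cases j <;>
    simp [σx, σy, σz, mul_apply, Fin.sum_univ_two, star_eq_conjTranspose, conjTranspose_apply] <;>
    first | ring1 | linear_combination h' - (b : ℂ) ^ 2 * Complex.I_sq

theorem norm_reindex_sum_tensorFam_update_le {n : ℕ} {m : Type*} [Fintype m] [DecidableEq m]
    (e : (Fin n → Fin 2) ≃ m) (A : Fin n → Matrix (Fin 2) (Fin 2) ℂ)
    (hA : ∀ l, A l ∈ unitary (Matrix (Fin 2) (Fin 2) ℂ)) :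
    ‖reindex e e (∑ l, tensorFam (Function.update (fun _ => 1) l (A l)))‖ ≤ n := by
  have hfactor (l k : Fin n) : Function.update (fun _ => (1 : Matrix (Fin 2) (Fin 2) ℂ)) l (A l) k ∈
      unitary (Matrix (Fin 2) (Fin 2) ℂ) := by
    rcases eq_or_ne k l with rfl | hkl
    · simp [hA]
    · simp [Function.update_of_ne hkl, one_mem]
  rw [← coe_reindexAlgEquiv ℂ ℂ, map_sum]
  calc ‖∑ l, reindexAlgEquiv ℂ ℂ e (tensorFam (Function.update (fun _ => 1) l (A l)))‖
      ≤ ∑ _l : Fin n, (1 : ℝ) := norm_sum_le_of_le _ fun l _ =>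
        norm_le_one_of_mem_unitary (reindex_mem_unitary e (tensorFam_mem_unitary (hfactor l)))
    _ = n := by simp

theorem Complex.norm_exp_two_pi_I_mul_mul_div (j k N : ℕ) :
    ‖exp (2 * Real.pi * I * j * k / N)‖ = 1 := by
  have harg : (2 * Real.pi * I * j * k / N : ℂ) = ((2 * Real.pi * j * k / N : ℝ) : ℂ) * I := by
    push_cast
    ring
  rw [harg, norm_exp_ofReal_mul_I]

theorem inv_sqrt_two_pow_mul_sq (n : ℕ) :
    (√((2 : ℝ) ^ n))⁻¹ * ((2 : ℝ) ^ n) ^ 2 = 2 ^ ((3 * (n : ℝ)) / 2) := by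
  rw [Real.sqrt_eq_rpow, ← Real.rpow_natCast, ← Real.rpow_mul zero_le_two,
    ← Real.rpow_neg zero_le_two, ← Real.rpow_mul_natCast zero_le_two, ← Real.rpow_add two_pos]
  ring_nf

theorem generalized_qft_dist_to_qft_general (n : ℕ) (θ : ℝ) (hθ : 0 ≤ θ)
    (ax ay az : Fin (2 ^ n) → Fin n → ℝ)
    (hunit : ∀ k l, (ax k l) ^ 2 + (ay k l) ^ 2 + (az k l) ^ 2 = 1)
    (Γ : Fin (2 ^ n) → Matrix (Fin (2 ^ n)) (Fin (2 ^ n)) ℂ)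
    (hΓ : ∀ k, Γ k = Matrix.reindex finFunctionFinEquiv finFunctionFinEquiv
      (∑ l : Fin n, tensorFam (Function.update
        (fun _ => (1 : Matrix (Fin 2) (Fin 2) ℂ)) l
        ((ax k l : ℂ) • σx + (ay k l : ℂ) • σy + (az k l : ℂ) • σz))))
    (FG F : Matrix (Fin (2 ^ n)) (Fin (2 ^ n)) ℂ)
    (hFG : FG = ((Real.sqrt (2 ^ n) : ℂ))⁻¹ •
      ∑ j : Fin (2 ^ n), ∑ k : Fin (2 ^ n),
        Complex.exp (2 * Real.pi * Complex.I * (j : ℕ) * (k : ℕ) / (2 ^ n : ℕ)) •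
          (NormedSpace.exp ((Complex.I * (θ : ℂ)) • Γ k) *
            Matrix.single k j (1 : ℂ)))
    (hF : F = ((Real.sqrt (2 ^ n) : ℂ))⁻¹ •
      ∑ j : Fin (2 ^ n), ∑ k : Fin (2 ^ n),
        Complex.exp (2 * Real.pi * Complex.I * (j : ℕ) * (k : ℕ) / (2 ^ n : ℕ)) •
          Matrix.single k j (1 : ℂ)) :
    ‖FG - F‖ ≤ (2 : ℝ) ^ ((3 * (n : ℝ)) / 2) * Real.sqrt 2 * (θ * n) *
      Real.exp (Real.sqrt 2 * θ * n) := by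
  have hΓ_norm (k : Fin (2 ^ n)) : ‖Γ k‖ ≤ n := hΓ k ▸
    norm_reindex_sum_tensorFam_update_le _ _ fun l => pauli_combination_mem_unitary (hunit k l)
  have hexp (k : Fin (2 ^ n)) :
      ‖NormedSpace.exp ((Complex.I * (θ : ℂ)) • Γ k) - 1‖ ≤ θ * n * Real.exp (θ * n) := by
    have harg : ‖(Complex.I * (θ : ℂ)) • Γ k‖ ≤ θ * n := by
      rw [norm_smul, norm_mul, Complex.norm_I, one_mul, Complex.norm_real, Real.norm_of_nonneg hθ]
      exact mul_le_mul_of_nonneg_left (hΓ_norm k) hθ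
    exact (NormedSpace.norm_exp_sub_one_le ℂ _).trans
      (mul_le_mul harg (Real.exp_le_exp.2 harg) (by positivity) (by positivity))
  have hdiff : FG - F = ((Real.sqrt (2 ^ n) : ℂ))⁻¹ •
      ∑ j : Fin (2 ^ n), ∑ k : Fin (2 ^ n),
        Complex.exp (2 * Real.pi * Complex.I * (j : ℕ) * (k : ℕ) / (2 ^ n : ℕ)) •
          ((NormedSpace.exp ((Complex.I * (θ : ℂ)) • Γ k) - 1) * Matrix.single k j (1 : ℂ)) := by
    simp only [hFG, hF, ← smul_sub, ← Finset.sum_sub_distrib, sub_mul, one_mul]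
  have hθn : 0 ≤ θ * n := by positivity
  calc ‖FG - F‖ ≤ (√((2 : ℝ) ^ n))⁻¹ * (((2 : ℝ) ^ n) ^ 2 * (θ * n * Real.exp (θ * n))) := by
        rw [hdiff, norm_smul, norm_inv, Complex.norm_real, Real.norm_of_nonneg (Real.sqrt_nonneg _)]
        gcongr
        refine (norm_sum_sum_smul_mul_single_le (m := Fin (2 ^ n)) _
          (fun j k => Complex.norm_exp_two_pi_I_mul_mul_div j k _) _ hexp).trans_eq ?_
        rw [Fintype.card_fin, Nat.cast_pow, Nat.cast_ofNat]
    _ = 2 ^ ((3 * (n : ℝ)) / 2) * (θ * n * Real.exp (θ * n)) := by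
        rw [← mul_assoc, inv_sqrt_two_pow_mul_sq]
    _ ≤ 2 ^ ((3 * (n : ℝ)) / 2) * (√2 * θ * n * Real.exp (√2 * θ * n)) := by
        have hθn_le : θ * n ≤ √2 * θ * n := by
          rw [mul_assoc]; exact le_mul_of_one_le_left hθn Real.one_lt_sqrt_two.le
        gcongr 2 ^ _ * ?_
        exact mul_le_mul hθn_le (Real.exp_le_exp.2 hθn_le) (Real.exp_pos _).le (hθn.trans hθn_le)
    _ = _ := by ring

/-- Distance between the generalized quantum Fourier transform
`F_G = N^{-1/2} ∑_{j,k} e^{2πijk/N} exp(iθΓ_k) E_{kj}` (with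
`Γ_k = ∑_l I₂^{⊗(l-1)} ⊗ (α^{(k,l)}·σ) ⊗ I₂^{⊗(n-l)}` built from unit vectors
`α^{(k,l)} ∈ ℝ³`) and the standard quantum Fourier transform
`F = N^{-1/2} ∑_{j,k} e^{2πijk/N} E_{kj}`:
`‖F_G - F‖ ≤ 2^{3n/2} √2 θ n e^{√2 θ n}` in operator norm. -/
theorem generalized_qft_dist_to_qft (n : ℕ) (hn : 1 ≤ n) (θ : ℝ) (hθ : 0 ≤ θ)
    (ax ay az : Fin (2 ^ n) → Fin n → ℝ)
    (hunit : ∀ k l, (ax k l) ^ 2 + (ay k l) ^ 2 + (az k l) ^ 2 = 1)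
    (Γ : Fin (2 ^ n) → Matrix (Fin (2 ^ n)) (Fin (2 ^ n)) ℂ)
    (hΓ : ∀ k, Γ k = Matrix.reindex finFunctionFinEquiv finFunctionFinEquiv
      (∑ l : Fin n, tensorFam (Function.update
        (fun _ => (1 : Matrix (Fin 2) (Fin 2) ℂ)) l
        ((ax k l : ℂ) • σx + (ay k l : ℂ) • σy + (az k l : ℂ) • σz))))
    (FG F : Matrix (Fin (2 ^ n)) (Fin (2 ^ n)) ℂ)
    (hFG : FG = ((Real.sqrt (2 ^ n) : ℂ))⁻¹ •
      ∑ j : Fin (2 ^ n), ∑ k : Fin (2 ^ n),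
        Complex.exp (2 * Real.pi * Complex.I * (j : ℕ) * (k : ℕ) / (2 ^ n : ℕ)) •
          (NormedSpace.exp ((Complex.I * (θ : ℂ)) • Γ k) *
            Matrix.single k j (1 : ℂ)))
    (hF : F = ((Real.sqrt (2 ^ n) : ℂ))⁻¹ •
      ∑ j : Fin (2 ^ n), ∑ k : Fin (2 ^ n),
        Complex.exp (2 * Real.pi * Complex.I * (j : ℕ) * (k : ℕ) / (2 ^ n : ℕ)) •
          Matrix.single k j (1 : ℂ)) :
    ‖FG - F‖ ≤ (2 : ℝ) ^ ((3 * (n : ℝ)) / 2) * Real.sqrt 2 * (θ * n) *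
      Real.exp (Real.sqrt 2 * θ * n) :=
  generalized_qft_dist_to_qft_general n θ hθ ax ay az hunit Γ hΓ FG F hFG hF
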